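/- Let G = (V, E, (C^WW, C^WR)) be a hyper-polygraph, cons ∈ C^WW, and e = (T,T',WW,x) ∈ cons. If the edge set E ∪ {e} ∪ {(S,T',RW,x) : (T,S,WR,x) ∈ E, S ≠ T'} is cyclic, then G and the hyper-polygraph (V, E, ((C^WW ∖ {cons}) ∪ {cons ∖ {e}}, C^WR)) have exactly the same acyclic compatible directed labeled graphs. -/

import Mathlib

namespace DBIso

/-! ### Operations, transactions and histories -/

/-- An operation: a read `R(x,v)` or a write `W(x,v)` on key `x` with value `v`. -/
inductive Op (Key Val : Type) where
  | read  (k : Key) (v : Val)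
  | write (k : Key) (v : Val)

variable {Key Val : Type}

/-- The key accessed by an operation. -/
def Op.key : Op Key Val → Key
  | .read k _ => k
  | .write k _ => k

/-- The value read or written by an operation. -/
def Op.val : Op Key Val → Val
  | .read _ w => w
  | .write _ w => w

/-- A transaction: a finite nonempty set of (identified) operations together with
a strict total order on them (the program order), modelled as a nonempty list of
operations tagged by pairwise distinct operation identifiers; the list order is
the program order `po`. -/
structure Txn (Key Val : Type) where
  ops : List (ℕ × Op Key Val)
  ops_nonempty : ops ≠ []
  ids_nodup : (ops.map Prod.fst).Nodup

/-- The operation of `T` at position `i` (in program order). -/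
def Txn.opAt (T : Txn Key Val) (i : Fin T.ops.length) : Op Key Val :=
  (T.ops.get i).2

/-- `T ⊢ W(x,v)`: `T` writes to key `x` and `v` is the po-last value it writes to `x`. -/
def Txn.FWrites (T : Txn Key Val) (x : Key) (v : Val) : Prop :=
  ∃ i : Fin T.ops.length, T.opAt i = Op.write x v ∧
    ∀ j : Fin T.ops.length, i < j → ∀ w : Val, T.opAt j ≠ Op.write x w

/-- `T ∈ WriteTx_x` : `T` writes to key `x`. -/
def Txn.WritesKey (T : Txn Key Val) (x : Key) : Prop :=
  ∃ v : Val, T.FWrites x v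

/-- `T ⊢ R(x,v)`: `T` reads `x` before writing to it and `v` is the value returned
by the po-first such read (equivalently, the po-first operation of `T` on `x` is a
read returning `v`). -/
def Txn.FReads (T : Txn Key Val) (x : Key) (v : Val) : Prop :=
  ∃ i : Fin T.ops.length, T.opAt i = Op.read x v ∧
    ∀ j : Fin T.ops.length, j < i → (T.opAt j).key ≠ x

/-- Internal consistency of a transaction: every read of a key `x` that is po-preceded
by an operation on `x` returns the value of the po-latest preceding operation on `x`. -/
def Txn.Internal (T : Txn Key Val) : Prop :=
  ∀ i j : Fin T.ops.length, j < i → ∀ (x : Key) (v : Val),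
    T.opAt i = Op.read x v → (T.opAt j).key = x →
    (∀ k : Fin T.ops.length, j < k → k < i → (T.opAt k).key ≠ x) →
    (T.opAt j).val = v

/-- A history: a finite set of transactions with pairwise disjoint operation sets,
together with the session order `SO` (a union of strict total orders on the disjoint
subsets, given by `sess`, partitioning the transactions), and a distinguished initial
transaction `init` (`T_⊥`) writing to every key and `SO`-preceding every other
transaction. -/
structure History (Key Val : Type) where
  txns : Set (Txn Key Val)
  txns_finite : txns.Finite
  SO : Txn Key Val → Txn Key Val → Prop
  sess : Txn Key Val → ℕ
  init : Txn Key Val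
  ops_disjoint : ∀ T ∈ txns, ∀ S ∈ txns, T ≠ S →
      ∀ i ∈ T.ops.map Prod.fst, i ∉ S.ops.map Prod.fst
  so_mem : ∀ T S, SO T S → T ∈ txns ∧ S ∈ txns
  so_irrefl : ∀ T, ¬ SO T T
  so_trans : ∀ T S U, SO T S → SO S U → SO T U
  so_total_sess : ∀ T ∈ txns, ∀ S ∈ txns, T ≠ S → sess T = sess S → SO T S ∨ SO S T
  so_sess : ∀ T S, SO T S → sess T = sess S ∨ T = init
  init_mem : init ∈ txns
  init_writes : ∀ x : Key, ∃ v : Val, init.FWrites x v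
  init_so : ∀ T ∈ txns, T ≠ init → SO init T

/-- `H ⊨ Int`: every transaction of `H` is internally consistent. -/
def History.SatInt (H : History Key Val) : Prop :=
  ∀ T ∈ H.txns, T.Internal

/-- `r` is a strict total order on the set `s`. -/
def IsStrictTotalOrderOn {α : Type*} (s : Set α) (r : α → α → Prop) : Prop :=
  (∀ a b, r a b → a ∈ s ∧ b ∈ s) ∧
  (∀ a, ¬ r a a) ∧
  (∀ a b c, r a b → r b c → r a c) ∧
  (∀ a ∈ s, ∀ b ∈ s, a ≠ b → r a b ∨ r b a)

/-- `H` satisfies SER: `H ⊨ Int` and there is a strict total order `co` on the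
transactions of `H` extending `SO` such that every read `S ⊢ R(x,v)` reads the
value written by the `co`-greatest `co`-predecessor of `S` writing `x`. -/
def History.SatSER (H : History Key Val) : Prop :=
  H.SatInt ∧
  ∃ co : Txn Key Val → Txn Key Val → Prop,
    IsStrictTotalOrderOn H.txns co ∧
    (∀ T S, H.SO T S → co T S) ∧
    ∀ S ∈ H.txns, ∀ (x : Key) (v : Val), S.FReads x v →
      ∃ T', co T' S ∧ T'.WritesKey x ∧
        (∀ T, co T S → T.WritesKey x → T = T' ∨ co T T') ∧
        T'.FWrites x v

/-! ### Dependency graphs -/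

/-- `(WR, WW, RW)` extend the history `H` to a dependency graph. -/
def IsDepGraph (H : History Key Val)
    (WR WW RW : Key → Txn Key Val → Txn Key Val → Prop) : Prop :=
  (∀ (x : Key) (T S : Txn Key Val), WR x T S → T ∈ H.txns ∧ S ∈ H.txns) ∧
  (∀ x : Key, ∀ S ∈ H.txns, (∃ v, S.FReads x v) → ∃! T, WR x T S) ∧
  (∀ (x : Key) (T S : Txn Key Val), WR x T S →
      T ≠ S ∧ ∃ v, T.FWrites x v ∧ S.FReads x v) ∧
  (∀ x : Key, IsStrictTotalOrderOn {T | T ∈ H.txns ∧ T.WritesKey x} (WW x)) ∧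
  (∀ (x : Key) (T S : Txn Key Val),
      RW x T S ↔ T ≠ S ∧ ∃ T', WR x T' T ∧ WW x T' S)

/-- A binary relation is acyclic iff its transitive closure is irreflexive. -/
def RelAcyclic {α : Type*} (r : α → α → Prop) : Prop :=
  ∀ a, ¬ Relation.TransGen r a a

/-- The union `SO ∪ WR ∪ WW ∪ RW` as a binary relation on transactions. -/
def DepUnion (H : History Key Val)
    (WR WW RW : Key → Txn Key Val → Txn Key Val → Prop) :
    Txn Key Val → Txn Key Val → Prop :=
  fun T S => H.SO T S ∨ (∃ x, WR x T S) ∨ (∃ x, WW x T S) ∨ (∃ x, RW x T S)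

/-- The relation `(SO ∪ WR ∪ WW) ; RW?`. -/
def SIRel (H : History Key Val)
    (WR WW RW : Key → Txn Key Val → Txn Key Val → Prop) :
    Txn Key Val → Txn Key Val → Prop :=
  fun T S => ∃ U, (H.SO T U ∨ (∃ x, WR x T U) ∨ (∃ x, WW x T U)) ∧
    (U = S ∨ ∃ x, RW x U S)

/-- `H` satisfies SI: `H ⊨ Int` and there exist `WR, WW, RW` extending `H` to a
dependency graph with `(SO ∪ WR ∪ WW) ; RW?` acyclic. -/
def History.SatSI (H : History Key Val) : Prop :=
  H.SatInt ∧ ∃ WR WW RW, IsDepGraph H WR WW RW ∧ RelAcyclic (SIRel H WR WW RW)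

/-! ### Labeled edges and hyper-polygraphs -/

/-- Dependency edge labels. -/
inductive DepLbl (Key : Type) where
  | SO
  | WR (x : Key)
  | WW (x : Key)
  | RW (x : Key)

/-- A directed labeled edge. -/
structure LEdge (V L : Type) where
  src : V
  dst : V
  lbl : L

variable {V L : Type}

abbrev DepEdge (V Key : Type) := LEdge V (DepLbl Key)
abbrev DepEdgeSet (V Key : Type) := Set (DepEdge V Key)

/-- There is an edge of `E` from `a` to `b`. -/
def EStep (E : Set (LEdge V L)) (a b : V) : Prop := ∃ l, LEdge.mk a b l ∈ E

/-- A set of labeled edges is cyclic iff some vertex has a nonempty edge path to itself. -/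
def EdgeCyclic (E : Set (LEdge V L)) : Prop := ∃ a, Relation.TransGen (EStep E) a a

/-- `a ⤳ b`: there is a (possibly empty) edge path of `E` from `a` to `b`. -/
def EReach (E : Set (LEdge V L)) (a b : V) : Prop := Relation.ReflTransGen (EStep E) a b

/-- A hyper-polygraph over the vertex type `V`: a known edge set `E` together with
the constraint collections `C^WW` and `C^WR`. -/
structure HyperPolygraph (V Key : Type) where
  E : DepEdgeSet V Key
  CWW : Set (DepEdgeSet V Key)
  CWR : Set (DepEdgeSet V Key)

/-- A directed labeled graph (given by its edge set `E'` over the same vertex set)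
is compatible with the hyper-polygraph `G`. -/
def Compatible (G : HyperPolygraph V Key) (E' : DepEdgeSet V Key) : Prop :=
  G.E ⊆ E' ∧
  (∀ (x : Key) (T T' S : V), T ≠ S →
      LEdge.mk T' T (DepLbl.WR x) ∈ E' → LEdge.mk T' S (DepLbl.WW x) ∈ E' →
      LEdge.mk T S (DepLbl.RW x) ∈ E') ∧
  (∀ C ∈ G.CWW ∪ G.CWR, ∃! e, e ∈ E' ∧ e ∈ C)

/-- A hyper-polygraph is SER-acyclic iff some acyclic graph is compatible with it. -/
def SERAcyclic (G : HyperPolygraph V Key) : Prop :=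
  ∃ E', Compatible G E' ∧ ¬ EdgeCyclic E'

/-- The vertex set of the hyper-polygraph of a history: its transactions. -/
abbrev History.Vert (H : History Key Val) : Type := {T : Txn Key Val // T ∈ H.txns}

/-- The hyper-polygraph of a history `H`. -/
def History.hpg (H : History Key Val) : HyperPolygraph H.Vert Key where
  E := {e | (e.lbl = DepLbl.SO ∧ H.SO e.src.1 e.dst.1) ∨
        (∃ (x : Key) (v : Val), e.lbl = DepLbl.WR x ∧
          e.dst.1.FReads x v ∧ e.src.1.FWrites x v ∧ e.src ≠ e.dst ∧
          (∀ T : H.Vert, T.1.FWrites x v → T ≠ e.dst → T = e.src))}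
  CWW := {C | ∃ (x : Key) (T S : H.Vert), T ≠ S ∧
        T.1.WritesKey x ∧ S.1.WritesKey x ∧
        C = {LEdge.mk T S (DepLbl.WW x), LEdge.mk S T (DepLbl.WW x)}}
  CWR := {C | ∃ (x : Key) (S : H.Vert) (v : Val), S.1.FReads x v ∧
        C = {e | ∃ T : H.Vert, T.1.FWrites x v ∧ T ≠ S ∧ e = LEdge.mk T S (DepLbl.WR x)}}

/-- The induced SI graph of a directed labeled graph:
`(E'_SO ∪ E'_WR ∪ E'_WW) ; (E'_RW)?`. -/
def InducedSI (E' : DepEdgeSet V Key) : V → V → Prop :=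
  fun a b => ∃ c : V,
    (LEdge.mk a c DepLbl.SO ∈ E' ∨ (∃ x, LEdge.mk a c (DepLbl.WR x) ∈ E') ∨
      (∃ x, LEdge.mk a c (DepLbl.WW x) ∈ E')) ∧
    (c = b ∨ ∃ x, LEdge.mk c b (DepLbl.RW x) ∈ E')

/-! ### Commit-order hyper-polygraphs -/

/-- Labels for commit-order hyper-polygraphs. -/
inductive COLbl (Key : Type) where
  | SO
  | WR (x : Key)
  | CO

abbrev COEdge (V Key : Type) := LEdge V (COLbl Key)

/-- A commit-order hyper-polygraph. -/
structure COHyperPolygraph (V Key : Type) where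
  E : Set (COEdge V Key)
  CCO : Set (Set (COEdge V Key))
  CWR : Set (Set (COEdge V Key))

/-- The commit-order hyper-polygraph of a history `H`. -/
def History.cohpg (H : History Key Val) : COHyperPolygraph H.Vert Key where
  E := {e | (e.lbl = COLbl.SO ∧ H.SO e.src.1 e.dst.1) ∨
        (∃ (x : Key) (v : Val), e.lbl = COLbl.WR x ∧
          e.dst.1.FReads x v ∧ e.src.1.FWrites x v ∧ e.src ≠ e.dst ∧
          (∀ T : H.Vert, T.1.FWrites x v → T ≠ e.dst → T = e.src))}
  CCO := {C | ∃ T S : H.Vert, T ≠ S ∧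
        C = {LEdge.mk T S COLbl.CO, LEdge.mk S T COLbl.CO}}
  CWR := {C | ∃ (x : Key) (S : H.Vert) (v : Val), S.1.FReads x v ∧
        C = {e | ∃ T : H.Vert, T.1.FWrites x v ∧ T ≠ S ∧ e = LEdge.mk T S (COLbl.WR x)}}

/-- A directed labeled graph (given by its edge set `E'`) is SER-compatible with the
commit-order hyper-polygraph of the history `H`. -/
def SERCompatible (H : History Key Val) (E' : Set (COEdge H.Vert Key)) : Prop :=
  H.cohpg.E ⊆ E' ∧
  (∀ C ∈ H.cohpg.CCO ∪ H.cohpg.CWR, ∃! e, e ∈ E' ∧ e ∈ C) ∧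
  (∀ (x : Key) (T₁ T₂ T₃ : H.Vert), T₁ ≠ T₂ →
      LEdge.mk T₁ T₃ (COLbl.WR x) ∈ E' → T₂.1.WritesKey x →
      LEdge.mk T₂ T₃ COLbl.CO ∈ E' → LEdge.mk T₂ T₁ COLbl.CO ∈ E')

/-- The read-from conditions of a dependency graph on a family `WR`. -/
def ReadFromConds (H : History Key Val)
    (WR : Key → Txn Key Val → Txn Key Val → Prop) : Prop :=
  (∀ (x : Key) (T S : Txn Key Val), WR x T S → T ∈ H.txns ∧ S ∈ H.txns) ∧
  (∀ x : Key, ∀ S ∈ H.txns, (∃ v, S.FReads x v) → ∃! T, WR x T S) ∧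
  (∀ (x : Key) (T S : Txn Key Val), WR x T S →
      T ≠ S ∧ ∃ v, T.FWrites x v ∧ S.FReads x v)

/-! ### The pruning transition system -/

/-- `{(S,T',RW,x) : (T,S,WR,x) ∈ E, S ≠ T'}`: the RW edges derived from the WW edge
`(T,T',WW,x)` and the WR edges of `E`. -/
def DerivedRWofWW (E : DepEdgeSet V Key) (T T' : V) (x : Key) : DepEdgeSet V Key :=
  {e | ∃ S : V, LEdge.mk T S (DepLbl.WR x) ∈ E ∧ S ≠ T' ∧
      e = LEdge.mk S T' (DepLbl.RW x)}

/-- `{(S,T',RW,x) : (T,T',WW,x) ∈ E, S ≠ T'}`: the RW edges derived from the WR edge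
`(T,S,WR,x)` and the WW edges of `E`. -/
def DerivedRWofWR (E : DepEdgeSet V Key) (T S : V) (x : Key) : DepEdgeSet V Key :=
  {e | ∃ T' : V, LEdge.mk T T' (DepLbl.WW x) ∈ E ∧ S ≠ T' ∧
      e = LEdge.mk S T' (DepLbl.RW x)}

/-- States of the pruning transition system: a triple `⟨E, C^WW, C^WR⟩` or the
terminal state `S#` (`bad`). -/
inductive PState (V Key : Type) where
  | node (E : DepEdgeSet V Key) (CWW CWR : Set (DepEdgeSet V Key)) : PState V Key
  | bad : PState V Key

/-- The pruning transition relation `↪`. -/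
inductive PruneStep : PState V Key → PState V Key → Prop where
  | noChoice {E : DepEdgeSet V Key} {CWW CWR : Set (DepEdgeSet V Key)}
      (h : (∅ : DepEdgeSet V Key) ∈ CWW ∪ CWR) :
      PruneStep (.node E CWW CWR) .bad
  | cyc {E : DepEdgeSet V Key} {CWW CWR : Set (DepEdgeSet V Key)}
      (h : EdgeCyclic E) :
      PruneStep (.node E CWW CWR) .bad
  | wwElim {E : DepEdgeSet V Key} {CWW CWR : Set (DepEdgeSet V Key)}
      {cons : DepEdgeSet V Key} {T T' : V} {x : Key}
      (hc : cons ∈ CWW) (he : LEdge.mk T T' (DepLbl.WW x) ∈ cons)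
      (hcyc : EdgeCyclic (E ∪ {LEdge.mk T T' (DepLbl.WW x)} ∪ DerivedRWofWW E T T' x)) :
      PruneStep (.node E CWW CWR)
        (.node E ((CWW \ {cons}) ∪ {cons \ {LEdge.mk T T' (DepLbl.WW x)}}) CWR)
  | wrElim {E : DepEdgeSet V Key} {CWW CWR : Set (DepEdgeSet V Key)}
      {cons : DepEdgeSet V Key} {T S : V} {x : Key}
      (hc : cons ∈ CWR) (he : LEdge.mk T S (DepLbl.WR x) ∈ cons)
      (hcyc : EdgeCyclic (E ∪ {LEdge.mk T S (DepLbl.WR x)} ∪ DerivedRWofWR E T S x)) :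
      PruneStep (.node E CWW CWR)
        (.node E CWW ((CWR \ {cons}) ∪ {cons \ {LEdge.mk T S (DepLbl.WR x)}}))
  | wwIntro {E : DepEdgeSet V Key} {CWW CWR : Set (DepEdgeSet V Key)}
      {T T' : V} {x : Key}
      (hc : ({LEdge.mk T T' (DepLbl.WW x)} : DepEdgeSet V Key) ∈ CWW) :
      PruneStep (.node E CWW CWR)
        (.node (E ∪ {LEdge.mk T T' (DepLbl.WW x)} ∪ DerivedRWofWW E T T' x)
          (CWW \ {{LEdge.mk T T' (DepLbl.WW x)}}) CWR)
  | wrIntro {E : DepEdgeSet V Key} {CWW CWR : Set (DepEdgeSet V Key)}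
      {T S : V} {x : Key}
      (hc : ({LEdge.mk T S (DepLbl.WR x)} : DepEdgeSet V Key) ∈ CWR) :
      PruneStep (.node E CWW CWR)
        (.node (E ∪ {LEdge.mk T S (DepLbl.WR x)} ∪ DerivedRWofWR E T S x)
          CWW (CWR \ {{LEdge.mk T S (DepLbl.WR x)}}))

/-! ### Boolean encoding -/

/-- The edges occurring in some constraint of `G` (i.e. the edges carrying a
Boolean variable, besides the RW variables). -/
def ConsEdges (G : HyperPolygraph V Key) : DepEdgeSet V Key :=
  ⋃₀ (G.CWW ∪ G.CWR)

/-- The truth value, under the assignment `α`, of the literal associated with an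
edge: the constant true if the edge lies in `G.E`, and its variable's value
otherwise. -/
def EdgeVal (G : HyperPolygraph V Key) (α : DepEdge V Key → Prop)
    (e : DepEdge V Key) : Prop :=
  e ∈ G.E ∨ α e

/-- `α` satisfies the Boolean encoding `Φ_G` of the hyper-polygraph `G`. -/
def SatPhi (G : HyperPolygraph V Key) (α : DepEdge V Key → Prop) : Prop :=
  (∀ C ∈ G.CWW ∪ G.CWR, ∃ e ∈ C, α e) ∧
  (∀ C ∈ G.CWW ∪ G.CWR, ∀ e ∈ C, ∀ e' ∈ C, e ≠ e' → ¬(α e ∧ α e')) ∧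
  (∀ (x : Key) (T T' S : V), S ≠ T' →
      (LEdge.mk T T' (DepLbl.WW x) ∈ G.E ∨ LEdge.mk T T' (DepLbl.WW x) ∈ ConsEdges G) →
      (LEdge.mk T S (DepLbl.WR x) ∈ G.E ∨ LEdge.mk T S (DepLbl.WR x) ∈ ConsEdges G) →
      EdgeVal G α (LEdge.mk T T' (DepLbl.WW x)) →
      EdgeVal G α (LEdge.mk T S (DepLbl.WR x)) →
      α (LEdge.mk S T' (DepLbl.RW x)))

/-- The graph induced by the assignment `α`: `G.E` together with all constraint
edges and RW edges whose variables `α` sets to true. -/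
def InducedOf (G : HyperPolygraph V Key) (α : DepEdge V Key → Prop) :
    DepEdgeSet V Key :=
  G.E ∪ {e | e ∈ ConsEdges G ∧ α e} ∪
    {e | (∃ (x : Key) (S T' : V), S ≠ T' ∧ e = LEdge.mk S T' (DepLbl.RW x)) ∧ α e}

/-- `α` satisfies all 2-width-cycle clauses of `G`. -/
def SatPairClauses (G : HyperPolygraph V Key) (α : DepEdge V Key → Prop) : Prop :=
  (∀ e₁ e₂ : DepEdge V Key, e₁ ∈ ConsEdges G → e₂ ∈ ConsEdges G → e₁ ≠ e₂ →
      EReach G.E e₁.dst e₂.src → EReach G.E e₂.dst e₁.src → ¬(α e₁ ∧ α e₂)) ∧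
  (∀ (x : Key) (T T' S : V), T' ≠ T → T' ≠ S → EReach G.E T' S →
      LEdge.mk T T' (DepLbl.WW x) ∈ ConsEdges G →
      LEdge.mk T S (DepLbl.WR x) ∈ ConsEdges G →
      ¬(α (LEdge.mk T T' (DepLbl.WW x)) ∧ α (LEdge.mk T S (DepLbl.WR x))))

/-! An acyclic graph compatible with either hyper-polygraph cannot contain `e`: compatibility
forces the RW edges derived from `e` and the WR edges of `E`, so it would contain the cyclic edge
set of the hypothesis. Hence in such a graph `cons` and `cons ∖ {e}` select the same edge. -/

theorem EdgeCyclic.mono {E₁ E₂ : Set (LEdge V L)} (h : E₁ ⊆ E₂) (h₁ : EdgeCyclic E₁) :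
    EdgeCyclic E₂ := by
  obtain ⟨a, ha⟩ := h₁
  exact ⟨a, Relation.TransGen.mono (fun _ _ ⟨l, hl⟩ => ⟨l, h hl⟩) a a ha⟩

theorem Compatible.union_derivedRWofWW_subset {G : HyperPolygraph V Key} {E' : DepEdgeSet V Key}
    (hE' : Compatible G E') {T T' : V} {x : Key} (he : LEdge.mk T T' (DepLbl.WW x) ∈ E') :
    G.E ∪ {LEdge.mk T T' (DepLbl.WW x)} ∪ DerivedRWofWW G.E T T' x ⊆ E' := by
  rintro f ((hf | rfl) | ⟨S, hS, hST', rfl⟩)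
  · exact hE'.1 hf
  · exact he
  · exact hE'.2.1 x S T T' hST' (hE'.1 hS) he

theorem Compatible.ww_not_mem_of_edgeCyclic {G : HyperPolygraph V Key} {E' : DepEdgeSet V Key}
    (hE' : Compatible G E') (hac : ¬ EdgeCyclic E') {T T' : V} {x : Key}
    (hcyc : EdgeCyclic (G.E ∪ {LEdge.mk T T' (DepLbl.WW x)} ∪ DerivedRWofWW G.E T T' x)) :
    LEdge.mk T T' (DepLbl.WW x) ∉ E' :=
  fun he => hac (hcyc.mono (hE'.union_derivedRWofWW_subset he))

theorem existsUnique_mem_diff_singleton_iff {α : Type*} {E C : Set α} {e : α} (he : e ∉ E) :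
    (∃! f, f ∈ E ∧ f ∈ C \ {e}) ↔ ∃! f, f ∈ E ∧ f ∈ C :=
  existsUnique_congr fun _ => ⟨fun ⟨hfE, hfC, _⟩ => ⟨hfE, hfC⟩,
    fun ⟨hfE, hfC⟩ => ⟨hfE, hfC, ne_of_mem_of_not_mem hfE he⟩⟩

theorem forall_existsUnique_mem_replace_diff_singleton_iff {α : Type*} {E : Set α}
    {𝒞 : Set (Set α)} {cons : Set α} {e : α} (hcons : cons ∈ 𝒞) (he : e ∉ E) :
    (∀ C ∈ (𝒞 \ {cons}) ∪ {cons \ {e}}, ∃! f, f ∈ E ∧ f ∈ C) ↔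
      ∀ C ∈ 𝒞, ∃! f, f ∈ E ∧ f ∈ C := by
  constructor
  · intro h C hC
    by_cases hCc : C = cons
    · subst hCc
      exact (existsUnique_mem_diff_singleton_iff he).1 (h _ (Or.inr rfl))
    · exact h C (Or.inl ⟨hC, hCc⟩)
  · rintro h C (⟨hC, -⟩ | rfl)
    · exact h C hC
    · exact (existsUnique_mem_diff_singleton_iff he).2 (h cons hcons)

theorem compatible_replace_diff_singleton_iff {G : HyperPolygraph V Key} {E' : DepEdgeSet V Key}
    {cons : DepEdgeSet V Key} (hc : cons ∈ G.CWW) {e : DepEdge V Key} (he : e ∉ E') :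
    Compatible ⟨G.E, (G.CWW \ {cons}) ∪ {cons \ {e}}, G.CWR⟩ E' ↔ Compatible G E' := by
  refine and_congr_right' (and_congr_right' ?_)
  exact forall₂_or_left.trans <|
    (and_congr_left' (forall_existsUnique_mem_replace_diff_singleton_iff hc he)).trans
      forall₂_or_left.symm

theorem wwElim_same_acyclic_compatible_general (V Key : Type)
    (G : HyperPolygraph V Key)
    (cons : DepEdgeSet V Key) (hc : cons ∈ G.CWW)
    (T T' : V) (x : Key)
    (hcyc : EdgeCyclic
      (G.E ∪ {LEdge.mk T T' (DepLbl.WW x)} ∪ DerivedRWofWW G.E T T' x)) :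
    ∀ E' : DepEdgeSet V Key,
      (Compatible G E' ∧ ¬ EdgeCyclic E') ↔
      (Compatible
          ⟨G.E, (G.CWW \ {cons}) ∪ {cons \ {LEdge.mk T T' (DepLbl.WW x)}}, G.CWR⟩ E' ∧
        ¬ EdgeCyclic E') := by
  intro E'
  constructor
  · rintro ⟨hE', hac⟩
    have he := hE'.ww_not_mem_of_edgeCyclic hac hcyc
    exact ⟨(compatible_replace_diff_singleton_iff hc he).2 hE', hac⟩
  · rintro ⟨hE', hac⟩
    have he := hE'.ww_not_mem_of_edgeCyclic hac hcyc
    exact ⟨(compatible_replace_diff_singleton_iff hc he).1 hE', hac⟩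

/-- WW-Elim preserves the acyclic compatible graphs. -/
theorem wwElim_same_acyclic_compatible (V Key : Type) [Finite V]
    (G : HyperPolygraph V Key) (hfin : ∀ C ∈ G.CWW ∪ G.CWR, C.Finite)
    (cons : DepEdgeSet V Key) (hc : cons ∈ G.CWW)
    (T T' : V) (x : Key) (he : LEdge.mk T T' (DepLbl.WW x) ∈ cons)
    (hcyc : EdgeCyclic
      (G.E ∪ {LEdge.mk T T' (DepLbl.WW x)} ∪ DerivedRWofWW G.E T T' x)) :
    ∀ E' : DepEdgeSet V Key,
      (Compatible G E' ∧ ¬ EdgeCyclic E') ↔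
      (Compatible
          ⟨G.E, (G.CWW \ {cons}) ∪ {cons \ {LEdge.mk T T' (DepLbl.WW x)}}, G.CWR⟩ E' ∧
        ¬ EdgeCyclic E') :=
  wwElim_same_acyclic_compatible_general V Key G cons hc T T' x hcyc

end DBIso
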